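/- Let (X,d) be a compact metric space, (p_k) a sequence of positive integers, and (A_i), (B_i) decreasing sequences of nonempty compact subsets of X with ⋂_i A_i = {a} and ⋂_i B_i = {b}, where a ≠ b. Suppose that for every sequence c = (C_1, C_2, …) with each C_k ∈ {A_k, B_k}, there exists x_c ∈ X such that f_1^{p_k}(x_c) ∈ C_k for all k ≥ 1. Then (X, f_{1,∞}) is uniformly distributively chaotic in the sequence (p_k). -/

import Mathlib

open Filter
open scoped Classical

variable {X : Type*}

/-- `orb f n = f_n ∘ ⋯ ∘ f_1` (0-based: `f k` is the `(k+1)`-st map). -/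
def orb (f : ℕ → X → X) : ℕ → X → X
  | 0 => id
  | n + 1 => f n ∘ orb f n

/-- Lower distributional density along the time sequence `p`. -/
noncomputable def phiLow [MetricSpace X] (f : ℕ → X → X) (p : ℕ → ℕ) (x y : X) (t : ℝ) : ℝ :=
  liminf (fun n =>
    (((Finset.range n).filter
      (fun i => dist (orb f (p i) x) (orb f (p i) y) < t)).card : ℝ) / n) atTop

/-- Upper distributional density along the time sequence `p`. -/
noncomputable def phiUpp [MetricSpace X] (f : ℕ → X → X) (p : ℕ → ℕ) (x y : X) (t : ℝ) : ℝ :=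
  limsup (fun n =>
    (((Finset.range n).filter
      (fun i => dist (orb f (p i) x) (orb f (p i) y) < t)).card : ℝ) / n) atTop

/-- Uniform distributional chaos in the sequence `p`. -/
def UnifDistChaosInSeq [MetricSpace X] (f : ℕ → X → X) (p : ℕ → ℕ) : Prop :=
  ∃ S : Set X, ¬S.Countable ∧ ∃ ε > 0, ∀ x ∈ S, ∀ y ∈ S, x ≠ y →
    phiLow f p x y ε = 0 ∧ ∀ t : ℝ, 0 < t → phiUpp f p x y t = 1

/-!
Cut time into the blocks `[(j+1)!, (j+2)!)`; each block occupies the proportion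
`1 - 1/(j+2)` of `[0, (j+2)!)`. To `r : ℕ → Bool` attach the itinerary that prescribes `A` on
even blocks and, on the odd block `2 * pair n m + 1`, prescribes `A` or `B` according to `r n`.
For `r ≠ r'` the itineraries agree (both `A`) on infinitely many blocks, where late in time the
two orbits are close to `a`, and disagree on infinitely many blocks, where one orbit is near `a`
and the other near `b`. Hence the lower density of close times is `0` and the upper density `1`,
with `ε = d(a, b) / 2`; the same separation makes `r ↦ x_r` injective on the uncountable
set `ℕ → Bool`.
-/

open Finset Topology

section FreqRatio

variable (P : ℕ → Prop) [DecidablePred P]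

noncomputable def freqRatio (n : ℕ) : ℝ := #(filter P (range n)) / n

lemma freqRatio_nonneg (n : ℕ) : 0 ≤ freqRatio P n := by
  unfold freqRatio; positivity

lemma freqRatio_le_one (n : ℕ) : freqRatio P n ≤ 1 := by
  refine div_le_one_of_le₀ ?_ n.cast_nonneg
  exact_mod_cast (card_filter_le _ _).trans (card_range n).le

lemma isBoundedUnder_le_freqRatio : IsBoundedUnder (· ≤ ·) atTop (freqRatio P) :=
  isBoundedUnder_of ⟨1, freqRatio_le_one P⟩

lemma isBoundedUnder_ge_freqRatio : IsBoundedUnder (· ≥ ·) atTop (freqRatio P) :=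
  isBoundedUnder_of ⟨0, freqRatio_nonneg P⟩

variable {P}

lemma freqRatio_le_of_forall_not {m n : ℕ} (hP : ∀ i ∈ Ico m n, ¬P i) :
    freqRatio P n ≤ m / n := by
  have hsub : filter P (range n) ⊆ range m := by
    intro i hi
    rw [mem_filter, mem_range] at hi
    rw [mem_range]
    by_contra! hmi
    exact hP i (mem_Ico.2 ⟨hmi, hi.1⟩) hi.2
  have hcard : (#(filter P (range n)) : ℝ) ≤ m := by
    exact_mod_cast (card_le_card hsub).trans (card_range m).le
  exact div_le_div_of_nonneg_right hcard n.cast_nonneg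

lemma one_sub_div_le_freqRatio {m n : ℕ} (hn : 0 < n) (hP : ∀ i ∈ Ico m n, P i) :
    1 - m / n ≤ freqRatio P n := by
  have hsub : range n ⊆ filter P (range n) ∪ range m := by
    intro i hi
    rw [mem_range] at hi
    simp only [mem_union, mem_filter, mem_range]
    by_cases hmi : m ≤ i
    · exact .inl ⟨hi, hP i (mem_Ico.2 ⟨hmi, hi⟩)⟩
    · exact .inr (by omega)
  have hcard : (n : ℝ) ≤ #(filter P (range n)) + m := by
    have := (card_le_card hsub).trans (card_union_le _ _)
    rw [card_range, card_range] at this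
    exact_mod_cast this
  have hn' : (0 : ℝ) < n := by exact_mod_cast hn
  rw [freqRatio, one_sub_div hn'.ne', div_le_div_iff_of_pos_right hn']
  linarith

variable {m n : ℕ → ℕ} (hn : Tendsto n atTop atTop)
  (hmn : Tendsto (fun j => (m j : ℝ) / n j) atTop (𝓝 0))
include hn hmn

lemma liminf_freqRatio_eq_zero (hP : ∃ᶠ j in atTop, ∀ i ∈ Ico (m j) (n j), ¬P i) :
    liminf (freqRatio P) atTop = 0 := by
  refine le_antisymm (le_of_forall_pos_le_add fun δ hδ => ?_)
    (le_liminf_of_le (isBoundedUnder_le_freqRatio P).isCoboundedUnder_ge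
      (.of_forall (freqRatio_nonneg P)))
  have hsmall : ∀ᶠ j in atTop, (m j : ℝ) / n j ≤ δ := hmn.eventually (ge_mem_nhds hδ)
  rw [zero_add]
  refine liminf_le_of_frequently_le (hn.frequently ?_) (isBoundedUnder_ge_freqRatio P)
  exact (hP.and_eventually hsmall).mono fun j hj => (freqRatio_le_of_forall_not hj.1).trans hj.2

lemma limsup_freqRatio_eq_one (hP : ∃ᶠ j in atTop, ∀ i ∈ Ico (m j) (n j), P i) :
    limsup (freqRatio P) atTop = 1 := by
  refine le_antisymm
    (limsup_le_of_le (isBoundedUnder_ge_freqRatio P).isCoboundedUnder_le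
      (.of_forall (freqRatio_le_one P)))
    (le_of_forall_pos_le_add fun δ hδ => ?_)
  have hsmall : ∀ᶠ j in atTop, (m j : ℝ) / n j ≤ δ ∧ 0 < n j :=
    (hmn.eventually (ge_mem_nhds hδ)).and (hn.eventually_gt_atTop 0)
  rw [← sub_le_iff_le_add]
  refine le_limsup_of_frequently_le (hn.frequently ?_) (isBoundedUnder_le_freqRatio P)
  refine (hP.and_eventually hsmall).mono fun j ⟨hj, hratio, hpos⟩ => ?_
  exact (sub_le_sub_left hratio 1).trans (one_sub_div_le_freqRatio hpos hj)

end FreqRatio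

open scoped Nat

lemma tendsto_factorial_div_factorial_succ :
    Tendsto (fun j => ((j + 1)! : ℝ) / (j + 2)!) atTop (𝓝 0) := by
  have hratio (j : ℕ) : 1 / (((j + 1 : ℕ) : ℝ) + 1) = ((j + 1)! : ℝ) / (j + 2)! := by
    rw [Nat.factorial_succ (j + 1)]
    push_cast
    field_simp
  exact ((tendsto_one_div_add_atTop_nhds_zero_nat (𝕜 := ℝ)).comp
    (tendsto_add_atTop_nat 1)).congr hratio

lemma tendsto_factorial_add_two : Tendsto (fun j => (j + 2)!) atTop atTop :=
  tendsto_atTop_mono (fun j => (Nat.self_le_factorial _).trans' (Nat.le_add_right j 2))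
    tendsto_id

def factorialBlock (j : ℕ) : Finset ℕ := Ico (j + 1)! (j + 2)!

lemma factorial_mem_factorialBlock (j : ℕ) : (j + 1)! ∈ factorialBlock j :=
  left_mem_Ico.2 (Nat.factorial_lt_of_lt j.succ_pos (by omega))

lemma Filter.Eventually.forall_mem_factorialBlock {Q : ℕ → Prop}
    (h : ∀ᶠ k in atTop, Q k) : ∀ᶠ j in atTop, ∀ k ∈ factorialBlock j, Q k := by
  obtain ⟨K, hK⟩ := eventually_atTop.1 h
  refine eventually_atTop.2 ⟨K, fun j hj k hk => hK k ?_⟩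
  calc K ≤ j + 1 := by omega
    _ ≤ (j + 1)! := Nat.self_le_factorial _
    _ ≤ k := (mem_Ico.1 hk).1

def factorialBlockIndex (k : ℕ) : ℕ :=
  Nat.find (⟨k, (Nat.lt_add_of_pos_right two_pos).trans_le (Nat.self_le_factorial _)⟩ :
    ∃ j, k < (j + 2)!)

lemma factorialBlockIndex_eq {j k : ℕ} (hk : k ∈ factorialBlock j) :
    factorialBlockIndex k = j := by
  rw [factorialBlock, mem_Ico] at hk
  refine (Nat.find_eq_iff _).2 ⟨hk.2, fun i hij => ?_⟩
  exact not_lt.2 ((Nat.factorial_le (by omega)).trans hk.1)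

def blockCode (r : ℕ → Bool) (k : ℕ) : Bool :=
  if Even (factorialBlockIndex k) then true else r (factorialBlockIndex k / 2).unpair.1

lemma frequently_forall_blockCode_eq_true :
    ∃ᶠ j in atTop, ∀ r, ∀ k ∈ factorialBlock j, blockCode r k = true := by
  refine frequently_atTop.2 fun M => ⟨2 * M, by omega, fun r k hk => ?_⟩
  rw [blockCode, factorialBlockIndex_eq hk, if_pos (even_two_mul M)]

lemma frequently_forall_blockCode_ne {r r' : ℕ → Bool} (h : r ≠ r') :
    ∃ᶠ j in atTop, ∀ k ∈ factorialBlock j, blockCode r k ≠ blockCode r' k := by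
  obtain ⟨n, hn⟩ := Function.ne_iff.1 h
  refine frequently_atTop.2 fun M => ⟨2 * Nat.pair n M + 1, ?_, fun k hk => ?_⟩
  · have := Nat.right_le_pair n M
    omega
  · have hhalf : (2 * Nat.pair n M + 1) / 2 = Nat.pair n M := by omega
    simpa [blockCode, factorialBlockIndex_eq hk, hhalf] using hn

lemma tendsto_smallSets_nhds_of_iInter_eq_singleton [TopologicalSpace X] [T2Space X]
    {C : ℕ → Set X} (hC : Antitone C) (hc : ∀ k, IsCompact (C k)) {a : X}
    (hI : ⋂ k, C k = {a}) : Tendsto C atTop (𝓝 a).smallSets := by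
  refine tendsto_smallSets_iff.2 fun U hU => ?_
  obtain ⟨i, hi⟩ := exists_subset_nhds_of_isCompact hC.directed_ge hc
    (by rw [hI]; rintro x rfl; exact hU)
  exact eventually_atTop.2 ⟨i, fun k hk => (hC hk).trans hi⟩

section Metric

variable [MetricSpace X] {ι : Type*} {l : Filter ι}

lemma eventually_forall_dist_lt {C : ι → Set X} {a : X}
    (hC : Tendsto C l (𝓝 a).smallSets) {t : ℝ} (ht : 0 < t) :
    ∀ᶠ k in l, ∀ u ∈ C k, ∀ v ∈ C k, dist u v < t := by
  filter_upwards [tendsto_smallSets_iff.1 hC _ (Metric.ball_mem_nhds a (half_pos ht))]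
    with k hk u hu v hv
  calc dist u v ≤ dist u a + dist v a := dist_triangle_right u v a
    _ < t / 2 + t / 2 := add_lt_add (hk hu) (hk hv)
    _ = t := add_halves t

lemma eventually_forall_lt_dist {A B : ι → Set X} {a b : X} (hab : a ≠ b)
    (hA : Tendsto A l (𝓝 a).smallSets) (hB : Tendsto B l (𝓝 b).smallSets) :
    ∀ᶠ k in l, ∀ u ∈ A k, ∀ v ∈ B k, dist a b / 2 < dist u v := by
  have hr : 0 < dist a b / 4 := by have := dist_pos.2 hab; positivity
  filter_upwards [tendsto_smallSets_iff.1 hA _ (Metric.ball_mem_nhds a hr),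
    tendsto_smallSets_iff.1 hB _ (Metric.ball_mem_nhds b hr)] with k hkA hkB u hu v hv
  have hua : dist u a < dist a b / 4 := hkA hu
  have hvb : dist v b < dist a b / 4 := hkB hv
  linarith [dist_triangle4 a u v b, dist_comm a u]

end Metric

section Itinerary

variable [MetricSpace X] {A B : ℕ → Set X} {a b : X} {c c' : ℕ → Bool} {u v : ℕ → X}

lemma eventually_lt_dist_of_ne (hab : a ≠ b) (hA : Tendsto A atTop (𝓝 a).smallSets)
    (hB : Tendsto B atTop (𝓝 b).smallSets)
    (hu : ∀ k ≥ 1, u k ∈ if c k then A k else B k)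
    (hv : ∀ k ≥ 1, v k ∈ if c' k then A k else B k) :
    ∀ᶠ k in atTop, c k ≠ c' k → dist a b / 2 < dist (u k) (v k) := by
  filter_upwards [eventually_forall_lt_dist hab hA hB, eventually_ge_atTop 1] with k hk hk1 hne
  have huk := hu k hk1
  have hvk := hv k hk1
  cases hc : c k <;> cases hc' : c' k <;> simp only [hc, hc'] at hne huk hvk
  · exact absurd rfl hne
  · exact dist_comm (u k) (v k) ▸ hk _ hvk _ huk
  · exact hk _ huk _ hvk
  · exact absurd rfl hne

lemma eventually_dist_lt_of_eq_true (hA : Tendsto A atTop (𝓝 a).smallSets)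
    (hu : ∀ k ≥ 1, u k ∈ if c k then A k else B k)
    (hv : ∀ k ≥ 1, v k ∈ if c' k then A k else B k) {t : ℝ} (ht : 0 < t) :
    ∀ᶠ k in atTop, c k = true → c' k = true → dist (u k) (v k) < t := by
  filter_upwards [eventually_forall_dist_lt hA ht, eventually_ge_atTop 1] with k hk hk1 hc hc'
  have huk := hu k hk1
  have hvk := hv k hk1
  simp only [hc, hc', if_true] at huk hvk
  exact hk _ huk _ hvk

end Itinerary

lemma not_countable_range_of_injective {x : (ℕ → Bool) → X} (hx : Function.Injective x) :
    ¬(Set.range x).Countable := by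
  intro hcount
  have := Set.countable_univ_iff.1
    ((Set.mapsTo_range x Set.univ).countable_of_injOn hx.injOn hcount)
  rw [← Cardinal.mk_le_aleph0_iff, ← not_lt] at this
  exact this (by simpa using Cardinal.cantor Cardinal.aleph0)

theorem stmt_11_general [MetricSpace X] (f : ℕ → X → X) (p : ℕ → ℕ)
    (A B : ℕ → Set X) (hA : Antitone A) (hB : Antitone B)
    (hAc : ∀ i, IsCompact (A i)) (hBc : ∀ i, IsCompact (B i))
    (a b : X) (hab : a ≠ b) (hIA : ⋂ i, A i = {a}) (hIB : ⋂ i, B i = {b})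
    (hsel : ∀ c : ℕ → Bool, ∃ x : X, ∀ k ≥ 1,
      orb f (p k) x ∈ (if c k then A k else B k)) :
    UnifDistChaosInSeq f p := by
  have hA' := tendsto_smallSets_nhds_of_iInter_eq_singleton hA hAc hIA
  have hB' := tendsto_smallSets_nhds_of_iInter_eq_singleton hB hBc hIB
  choose x hx using fun r => hsel (blockCode r)
  have hfar {r r'} (h : r ≠ r') : ∃ᶠ j in atTop, ∀ i ∈ factorialBlock j,
      dist a b / 2 < dist (orb f (p i) (x r)) (orb f (p i) (x r')) :=
    ((eventually_lt_dist_of_ne hab hA' hB' (hx r) (hx r')).forall_mem_factorialBlock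
      |>.and_frequently (frequently_forall_blockCode_ne h)).mono
        fun j hj i hi => hj.1 i hi (hj.2 i hi)
  have hclose (r r' : ℕ → Bool) {t : ℝ} (ht : 0 < t) :
      ∃ᶠ j in atTop, ∀ i ∈ factorialBlock j,
        dist (orb f (p i) (x r)) (orb f (p i) (x r')) < t :=
    ((eventually_dist_lt_of_eq_true hA' (hx r) (hx r') ht).forall_mem_factorialBlock
      |>.and_frequently frequently_forall_blockCode_eq_true).mono
        fun j hj i hi => hj.1 i hi (hj.2 r i hi) (hj.2 r' i hi)
  have hinj : Function.Injective x := by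
    intro r r' h
    by_contra hne
    obtain ⟨j, hj⟩ := (hfar hne).exists
    have := hj _ (factorial_mem_factorialBlock j)
    rw [h, dist_self] at this
    exact (dist_pos.2 hab).not_gt (by linarith)
  refine ⟨Set.range x, not_countable_range_of_injective hinj, dist a b / 2,
    half_pos (dist_pos.2 hab), ?_⟩
  rintro _ ⟨r, rfl⟩ _ ⟨r', rfl⟩ hne
  have hrr : r ≠ r' := fun h => hne (congrArg x h)
  exact ⟨liminf_freqRatio_eq_zero tendsto_factorial_add_two tendsto_factorial_div_factorial_succ
      ((hfar hrr).mono fun j hj i hi => (hj i hi).not_gt),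
    fun t ht => limsup_freqRatio_eq_one tendsto_factorial_add_two
      tendsto_factorial_div_factorial_succ (hclose r r' ht)⟩

theorem stmt_11 [MetricSpace X] [CompactSpace X] (f : ℕ → X → X)
    (hf : ∀ n, Continuous (f n)) (p : ℕ → ℕ) (hp : ∀ k, 0 < p k)
    (A B : ℕ → Set X) (hA : Antitone A) (hB : Antitone B)
    (hAne : ∀ i, (A i).Nonempty) (hBne : ∀ i, (B i).Nonempty)
    (hAc : ∀ i, IsCompact (A i)) (hBc : ∀ i, IsCompact (B i))
    (a b : X) (hab : a ≠ b) (hIA : ⋂ i, A i = {a}) (hIB : ⋂ i, B i = {b})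
    (hsel : ∀ c : ℕ → Bool, ∃ x : X, ∀ k ≥ 1,
      orb f (p k) x ∈ (if c k then A k else B k)) :
    UnifDistChaosInSeq f p :=
  stmt_11_general f p A B hA hB hAc hBc a b hab hIA hIB hsel
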